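/- arXiv:2506.19134 — 3 statements merged into one kernel-verified Lean document; each statement's English description precedes it below -/
import Mathlib

section
/- Let μ > 0, M > 0, x ∈ ℝ, and let g : [0,∞) → ℝ be Lebesgue measurable with 0 ≤ g(s) ≤ M for all s ≥ 0. Define X(T) = x + ∫_0^T (μ − g(s)) ds for T ≥ 0, and assume that g(s) = 0 for (almost) every s with X(s) ≤ 0. Then X(T) ≥ min(x, 0) for all T ≥ 0. -/
open MeasureTheory Filter

lemma reserve_intervalIntegrable
    (μ M : ℝ) (g : ℝ → ℝ) (hg : Measurable g)
    (hg0 : ∀ s, 0 ≤ s → 0 ≤ g s) (hgM : ∀ s, 0 ≤ s → g s ≤ M)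
    {a b : ℝ} (ha : 0 ≤ a) (hab : a ≤ b) :
    IntervalIntegrable (fun s => μ - g s) volume a b := by
  rw [intervalIntegrable_iff_integrableOn_Ioc_of_le hab]
  apply Integrable.mono' (g := fun _ => |μ| + M)
    (integrableOn_const measure_Ioc_lt_top.ne)
  · exact (measurable_const.sub hg).aestronglyMeasurable
  · refine (ae_restrict_iff' measurableSet_Ioc).2 (ae_of_all _ fun s hs => ?_)
    have hs0 : 0 ≤ s := ha.trans hs.1.le
    have h1 := hg0 s hs0
    have h2 := hgM s hs0
    rw [Real.norm_eq_abs, abs_sub_le_iff]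
    constructor
    · linarith [le_abs_self μ]
    · linarith [neg_abs_le μ]

/-- under the prohibition `g(s) = 0` whenever `X(s) ≤ 0`,
the reserve satisfies `X(T) ≥ min(x,0)` for all `T ≥ 0`. -/
theorem reserve_bounded_below
    (μ M x : ℝ) (hμ : 0 < μ) (hM : 0 < M)
    (g : ℝ → ℝ) (hg : Measurable g)
    (hg0 : ∀ s, 0 ≤ s → 0 ≤ g s) (hgM : ∀ s, 0 ≤ s → g s ≤ M)
    (X : ℝ → ℝ) (hX : ∀ T, X T = x + ∫ s in (0:ℝ)..T, (μ - g s))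
    (hproh : ∀ᵐ s ∂(volume : Measure ℝ), 0 ≤ s → X s ≤ 0 → g s = 0) :
    ∀ T, 0 ≤ T → min x 0 ≤ X T := by
  intro T hT
  by_contra hcon
  push_neg at hcon
  set c := min x 0 with hc
  have hc0 : c ≤ 0 := min_le_right _ _
  have hX0 : X 0 = x := by simp [hX 0]
  -- continuity of X on [0,T]
  have hint : IntegrableOn (fun s => μ - g s) (Set.uIcc 0 T) volume := by
    have h := reserve_intervalIntegrable μ M g hg hg0 hgM le_rfl hT
    rw [intervalIntegrable_iff_integrableOn_Ioc_of_le hT] at h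
    rwa [Set.uIcc_of_le hT, integrableOn_Icc_iff_integrableOn_Ioc]
  have hcont : ContinuousOn X (Set.Icc 0 T) := by
    have := (continuousOn_const (c := x)).add
      (intervalIntegral.continuousOn_primitive_interval hint)
    rw [Set.uIcc_of_le hT] at this
    exact this.congr fun t _ => hX t
  -- the set of times where X ≥ c, and its supremum τ
  set S : Set ℝ := Set.Icc 0 T ∩ X ⁻¹' Set.Ici c with hS
  have hSne : S.Nonempty := ⟨0, ⟨le_rfl, hT⟩, by simp [hX0, hc]⟩
  have hSbdd : BddAbove S := ⟨T, fun s hs => hs.1.2⟩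
  have hSclosed : IsClosed S :=
    hcont.preimage_isClosed_of_isClosed isClosed_Icc isClosed_Ici
  set τ := sSup S with hτ
  have hτS : τ ∈ S := hSclosed.csSup_mem hSne hSbdd
  have hτ0 : 0 ≤ τ := hτS.1.1
  have hτT : τ ≤ T := hτS.1.2
  have hXτ : c ≤ X τ := hτS.2
  have hτltT : τ < T := hτT.lt_of_ne fun h => absurd (h ▸ hXτ) (not_le.2 hcon)
  -- on (τ, T], X < c ≤ 0
  have hneg : ∀ s ∈ Set.Ioc τ T, X s ≤ 0 := by
    intro s hs
    by_contra hpos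
    push_neg at hpos
    have : s ∈ S := ⟨⟨hτ0.trans hs.1.le, hs.2⟩, le_of_lt (hc0.trans_lt hpos)⟩
    exact absurd (le_csSup hSbdd this) (not_le.2 hs.1)
  -- integral decomposition
  have hadd : X T = X τ + ∫ s in τ..T, (μ - g s) := by
    have h1 := reserve_intervalIntegrable μ M g hg hg0 hgM le_rfl hτ0
    have h2 := reserve_intervalIntegrable μ M g hg hg0 hgM hτ0 hτT
    have := intervalIntegral.integral_add_adjacent_intervals h1 h2
    rw [hX T, hX τ, ← this]; ring
  -- on (τ, T], g = 0 a.e., hence the integral is μ (T - τ)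
  have hIeq : (∫ s in τ..T, (μ - g s)) = ∫ s in τ..T, μ := by
    apply intervalIntegral.integral_congr_ae
    filter_upwards [hproh] with s hs hmem
    rw [Set.uIoc_of_le hτltT.le] at hmem
    rw [hs (hτ0.trans hmem.1.le) (hneg s hmem), sub_zero]
  have : X T = X τ + μ * (T - τ) := by
    rw [hadd, hIeq, intervalIntegral.integral_const, smul_eq_mul, mul_comm]
  nlinarith
end

section
/- Let μ > 0, c > 1 and x0 ∈ ℝ. Set γ1 = (c−1)μ, γ2 = μ, p0 = γ1γ2/(γ1+γ2), and define p : ℝ → ℝ by p(x) = p0·exp(γ2(x−x0)) for x ≤ x0 and p(x) = p0·exp(−γ1(x−x0)) for x > x0. Let a : ℝ → ℝ be defined by a(x) = cμ for x > x0 and a(x) = 0 for x ≤ x0. Then ∫_ℝ a(x)·p(x) dx = μ. -/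
open MeasureTheory Real Set Filter

lemma exp_decay_integral (a b : ℝ) (hb : 0 < b) :
    ∫ x in Set.Ioi a, Real.exp (-b * (x - a)) = 1 / b := by
  have key := integral_Ioi_of_hasDerivAt_of_tendsto'
    (f := fun x => -(1/b) * Real.exp (-b * (x - a)))
    (f' := fun x => Real.exp (-b * (x - a))) (a := a) (m := 0)
    (fun x _ => by
      have h : HasDerivAt (fun x => -b * (x - a)) (-b) x := by
        simpa using ((hasDerivAt_id x).sub_const a).const_mul (-b)
      have := (h.exp).const_mul (-(1/b))
      have hb' : b ≠ 0 := hb.ne'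
      exact this.congr_deriv (by field_simp))
    ?_ ?_
  · rw [key]; simp
  · -- integrability
    have h0 : IntegrableOn (fun x => Real.exp (b * a) * Real.exp (-b * x)) (Set.Ioi a) :=
      (exp_neg_integrableOn_Ioi a hb).const_mul _
    refine h0.congr_fun (fun x _ => ?_) measurableSet_Ioi
    dsimp only; rw [← Real.exp_add]; ring_nf
  · -- tendsto
    have h1 : Tendsto (fun x : ℝ => b * (x - a)) atTop atTop := by
      simpa [sub_eq_add_neg] using
        (tendsto_atTop_add_const_right atTop (-a) tendsto_id).const_mul_atTop hb
    have h2 : Tendsto (fun x : ℝ => Real.exp (-b * (x - a))) atTop (nhds 0) := by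
      refine (Real.tendsto_exp_atBot.comp (tendsto_neg_atTop_atBot.comp h1)).congr fun x => ?_
      simp [Function.comp, neg_mul]
    have := h2.const_mul (-(1/b))
    simpa using this

/-- the average dividend rate of the threshold strategy
`a(x) = cμ·1(x > x0)` under the stationary density equals `μ`. -/
theorem threshold_strategy_average_reward
    (μ c x0 : ℝ) (hμ : 0 < μ) (hc : 1 < c) :
    let γ1 : ℝ := (c - 1) * μ
    let γ2 : ℝ := μ
    let p0 : ℝ := γ1 * γ2 / (γ1 + γ2)
    let p : ℝ → ℝ := fun x =>
      if x ≤ x0 then p0 * Real.exp (γ2 * (x - x0)) else p0 * Real.exp (-γ1 * (x - x0))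
    let a : ℝ → ℝ := fun x => if x0 < x then c * μ else 0
    (∫ x : ℝ, a x * p x) = μ := by
  intro γ1 γ2 p0 p a
  have hγ1 : 0 < γ1 := mul_pos (by linarith) hμ
  have heq : ∀ x, a x * p x =
      Set.indicator (Set.Ioi x0) (fun x => c * μ * p0 * Real.exp (-γ1 * (x - x0))) x := by
    intro x
    by_cases hx : x0 < x
    · simp [a, p, hx, not_le.mpr hx, Set.indicator_of_mem (Set.mem_Ioi.mpr hx)]
      ring
    · simp [a, p, hx, Set.indicator_of_notMem (fun h => hx (Set.mem_Ioi.mp h))]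
  rw [show (fun x => a x * p x) = _ from funext heq, MeasureTheory.integral_indicator measurableSet_Ioi]
  rw [MeasureTheory.integral_const_mul, exp_decay_integral x0 γ1 hγ1]
  have hcμ : c * μ ≠ 0 := by positivity
  have hc' : c - 1 + 1 ≠ 0 := (by linarith : (0:ℝ) < c - 1 + 1).ne'
  have hc1 : c - 1 ≠ 0 := (by linarith : (0:ℝ) < c - 1).ne'
  have hc0 : c ≠ 0 := (by linarith : (0:ℝ) < c).ne'
  simp only [γ1, γ2, p0]
  field_simp [γ1, γ2, p0]
  ring
end

section
/- Let μ > 0 and M > μ. Suppose r ∈ ℝ and V : ℝ → ℝ is continuously differentiable on ℝ, twice differentiable on ℝ \ {0}, satisfies V''(x) + μ·V'(x) = r for all x < 0 and V''(x) + (μ − M)·V'(x) + M − r = 0 for all x > 0, and has at most polynomial growth (there exist K > 0 and n ∈ ℕ with |V(x)| ≤ K·(1 + |x|^n) for all x ∈ ℝ). Then r = μ and there exists a constant C ∈ ℝ such that V(x) = C + x for all x ∈ ℝ. -/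
open Filter Real Set Topology


lemma pow_mul_exp_neg_mul_tendsto (b : ℝ) (hb : 0 < b) (m : ℕ) :
    Tendsto (fun t : ℝ => t ^ m * Real.exp (-(b * t))) atTop (𝓝 0) := by
  have h1 : Tendsto (fun t : ℝ => b * t) atTop atTop :=
    tendsto_id.const_mul_atTop hb
  have h2 := (tendsto_pow_mul_exp_neg_atTop_nhds_zero m).comp h1
  have h3 := h2.const_mul ((b : ℝ) ^ m)⁻¹
  have h4 : ∀ t : ℝ, ((b : ℝ) ^ m)⁻¹ * (((fun x => x ^ m * Real.exp (-x)) ∘ fun t => b * t) t)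
      = t ^ m * Real.exp (-(b * t)) := by
    intro t
    simp only [Function.comp_apply, mul_pow]
    field_simp
  simpa using h3.congr h4

lemma const_of_hasDerivAt_zero {s : Set ℝ} (hs : Convex ℝ s) {f : ℝ → ℝ}
    (hf : ∀ x ∈ s, HasDerivAt f 0 x) {x y : ℝ} (hx : x ∈ s) (hy : y ∈ s) : f x = f y := by
  have h := hs.norm_image_sub_le_of_norm_hasDerivWithin_le (C := 0) (f' := fun _ => 0)
    (fun z hz => (hf z hz).hasDerivWithinAt) (fun z _ => by simp) hx hy
  have h0 : ‖f y - f x‖ ≤ 0 := by simpa using h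
  have := norm_le_zero_iff.mp h0
  exact (sub_eq_zero.mp this).symm

lemma abs3 (a b d : ℝ) : |a - b - d| ≤ |a| + |b| + |d| := by
  have h1 : |a - b - d| ≤ |a - b| + |-d| := by
    rw [sub_eq_add_neg (a - b)]; exact abs_add_le _ _
  have h2 : |a - b| ≤ |a| + |-b| := by
    rw [sub_eq_add_neg]; exact abs_add_le _ _
  simp only [abs_neg] at h1 h2; linarith

lemma decay (b A R K c : ℝ) (hb : 0 < b) (n : ℕ)
    (hbound : ∀ t : ℝ, 0 < t → |c| * Real.exp (b * t) ≤ A + R * t + K * (1 + t ^ n)) :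
    c = 0 := by
  by_contra hc
  have hc' : 0 < |c| := abs_pos.mpr hc
  have hF : Tendsto (fun t : ℝ => (A + R * t + K * (1 + t ^ n)) * Real.exp (-(b * t)))
      atTop (𝓝 0) := by
    have h := fun m : ℕ => pow_mul_exp_neg_mul_tendsto b hb m
    have h' := (((h 0).const_mul A).add ((h 1).const_mul R)).add
      (((h 0).const_mul K).add ((h n).const_mul K))
    have h'' : Tendsto (fun t : ℝ => (A + R * t + K * (1 + t ^ n)) * Real.exp (-(b * t)))
        atTop (𝓝 (A * 0 + R * 0 + (K * 0 + K * 0))) := h'.congr (fun t => by ring)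
    simpa using h''
  have hev : ∀ᶠ t in atTop, (A + R * t + K * (1 + t ^ n)) * Real.exp (-(b * t)) < |c| :=
    hF.eventually (gt_mem_nhds hc')
  obtain ⟨t, ht0, hlt⟩ := ((eventually_gt_atTop (0:ℝ)).and hev).exists
  have h1 := hbound t ht0
  have h2 : |c| ≤ (A + R * t + K * (1 + t ^ n)) * Real.exp (-(b * t)) := by
    rw [Real.exp_neg, ← div_eq_mul_inv, le_div_iff₀ (Real.exp_pos _)]
    exact h1
  exact (h2.trans_lt hlt).false

section Main
open Filter Real Set Topology

/-- uniqueness for the ergodic Bellman equation in the class of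
polynomially growing `V`: necessarily `r = μ` and `V(x) = C + x`. -/
theorem bellman_uniqueness
    (μ M r : ℝ) (hμ : 0 < μ) (hM : μ < M) (V : ℝ → ℝ)
    (hC1 : ContDiff ℝ 1 V)
    (hdiff2 : ∀ x : ℝ, x ≠ 0 → DifferentiableAt ℝ (deriv V) x)
    (hneg : ∀ x < (0:ℝ), deriv (deriv V) x + μ * deriv V x = r)
    (hpos : ∀ x > (0:ℝ), deriv (deriv V) x + (μ - M) * deriv V x + M - r = 0)
    (hgrowth : ∃ K > (0:ℝ), ∃ n : ℕ, ∀ x : ℝ, |V x| ≤ K * (1 + |x| ^ n)) :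
    r = μ ∧ ∃ C : ℝ, ∀ x : ℝ, V x = C + x := by
  obtain ⟨K, hK, n, hKb⟩ := hgrowth
  have hβ : 0 < M - μ := sub_pos.mpr hM
  have hVd : Differentiable ℝ V := hC1.differentiable one_ne_zero
  have hWc : Continuous (deriv V) := hC1.continuous_deriv le_rfl
  have hW : ∀ x : ℝ, x ≠ 0 → HasDerivAt (deriv V) (deriv (deriv V) x) x :=
    fun x hx => (hdiff2 x hx).hasDerivAt
  -- ====== negative side ======
  obtain ⟨c, hgc⟩ : ∃ c : ℝ, ∀ x ∈ Iio (0:ℝ), (μ * deriv V x - r) * Real.exp (μ * x) = c := by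
    refine ⟨(μ * deriv V (-1) - r) * Real.exp (μ * (-1)), fun x hx => ?_⟩
    refine const_of_hasDerivAt_zero (convex_Iio 0) (f := fun y => (μ * deriv V y - r) * Real.exp (μ * y))
      ?_ hx (show (-1:ℝ) ∈ Iio 0 by norm_num)
    intro z hz
    have s1 : HasDerivAt (fun y => μ * deriv V y - r) (μ * deriv (deriv V) z) z :=
      ((hW z (ne_of_lt hz)).const_mul μ).sub_const r
    have s2 : HasDerivAt (fun y => Real.exp (μ * y)) (Real.exp (μ * z) * (μ * 1)) z :=
      ((hasDerivAt_id z).const_mul μ).exp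
    have s3 := s1.mul s2
    have h0 : μ * deriv (deriv V) z * Real.exp (μ * z)
        + (μ * deriv V z - r) * (Real.exp (μ * z) * (μ * 1)) = 0 := by
      linear_combination μ * Real.exp (μ * z) * hneg z hz
    exact h0 ▸ s3
  have hWneg : ∀ x ∈ Iio (0:ℝ), μ * deriv V x - r = c * Real.exp (-(μ * x)) := by
    intro x hx
    have hm : Real.exp (μ * x) * Real.exp (-(μ * x)) = 1 := by
      rw [← Real.exp_add]; simp
    linear_combination Real.exp (-(μ * x)) * hgc x hx - (μ * deriv V x - r) * hm
  obtain ⟨A, hformA⟩ : ∃ A : ℝ, ∀ x ∈ Iio (0:ℝ),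
      μ ^ 2 * V x - μ * r * x + c * Real.exp (-(μ * x)) = A := by
    refine ⟨μ ^ 2 * V (-1) - μ * r * (-1) + c * Real.exp (-(μ * (-1))), fun x hx => ?_⟩
    refine const_of_hasDerivAt_zero (convex_Iio 0)
      (f := fun y => μ ^ 2 * V y - μ * r * y + c * Real.exp (-(μ * y)))
      ?_ hx (show (-1:ℝ) ∈ Iio 0 by norm_num)
    intro z hz
    have t1 : HasDerivAt (fun y => μ ^ 2 * V y) (μ ^ 2 * deriv V z) z :=
      (hVd z).hasDerivAt.const_mul (μ ^ 2)
    have t2 : HasDerivAt (fun y => μ * r * y) (μ * r * 1) z :=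
      (hasDerivAt_id z).const_mul (μ * r)
    have t3 : HasDerivAt (fun y => Real.exp (-(μ * y))) (Real.exp (-(μ * z)) * -(μ * 1)) z :=
      (((hasDerivAt_id z).const_mul μ).neg).exp
    have t4 := t3.const_mul c
    have tt := (t1.sub t2).add t4
    have h0 : μ ^ 2 * deriv V z - μ * r * 1 + c * (Real.exp (-(μ * z)) * -(μ * 1)) = 0 := by
      linear_combination μ * hWneg z hz
    exact h0 ▸ tt
  have hc0 : c = 0 := by
    refine decay μ |A| (μ * |r|) (μ ^ 2 * K) c hμ n ?_
    intro t ht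
    have hf := hformA (-t) (by simpa using ht)
    rw [show -(μ * (-t)) = μ * t from by ring] at hf
    have hVt := hKb (-t)
    rw [show |(-t : ℝ)| = t from by rw [abs_neg, abs_of_pos ht]] at hVt
    have e2 : c * Real.exp (μ * t) = A - μ ^ 2 * V (-t) - μ * r * t := by
      linear_combination hf
    calc |c| * Real.exp (μ * t) = |c * Real.exp (μ * t)| := by
          rw [abs_mul, abs_of_pos (Real.exp_pos _)]
      _ = |A - μ ^ 2 * V (-t) - μ * r * t| := by rw [e2]
      _ ≤ |A| + |μ ^ 2 * V (-t)| + |μ * r * t| := abs3 _ _ _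
      _ ≤ |A| + μ * |r| * t + μ ^ 2 * K * (1 + t ^ n) := by
          have b1 : |μ ^ 2 * V (-t)| ≤ μ ^ 2 * (K * (1 + t ^ n)) := by
            rw [abs_mul, abs_of_nonneg (by positivity : (0:ℝ) ≤ μ ^ 2)]
            exact mul_le_mul_of_nonneg_left hVt (by positivity)
          have b2 : |μ * r * t| = μ * |r| * t := by
            rw [abs_mul, abs_mul, abs_of_pos hμ, abs_of_pos ht]
          linarith
  -- ====== positive side ======
  obtain ⟨c₂, hgc2⟩ : ∃ c₂ : ℝ, ∀ x ∈ Ioi (0:ℝ),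
      ((M - μ) * deriv V x - (M - r)) * Real.exp (-((M - μ) * x)) = c₂ := by
    refine ⟨((M - μ) * deriv V 1 - (M - r)) * Real.exp (-((M - μ) * 1)), fun x hx => ?_⟩
    refine const_of_hasDerivAt_zero (convex_Ioi 0)
      (f := fun y => ((M - μ) * deriv V y - (M - r)) * Real.exp (-((M - μ) * y)))
      ?_ hx (show (1:ℝ) ∈ Ioi 0 by norm_num)
    intro z hz
    have s1 : HasDerivAt (fun y => (M - μ) * deriv V y - (M - r)) ((M - μ) * deriv (deriv V) z) z :=
      ((hW z (ne_of_gt hz)).const_mul (M - μ)).sub_const (M - r)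
    have s2 : HasDerivAt (fun y => Real.exp (-((M - μ) * y))) (Real.exp (-((M - μ) * z)) * -((M - μ) * 1)) z :=
      (((hasDerivAt_id z).const_mul (M - μ)).neg).exp
    have s3 := s1.mul s2
    have h0 : (M - μ) * deriv (deriv V) z * Real.exp (-((M - μ) * z))
        + ((M - μ) * deriv V z - (M - r)) * (Real.exp (-((M - μ) * z)) * -((M - μ) * 1)) = 0 := by
      linear_combination (M - μ) * Real.exp (-((M - μ) * z)) * hpos z hz
    exact h0 ▸ s3
  have hWpos : ∀ x ∈ Ioi (0:ℝ),
      (M - μ) * deriv V x - (M - r) = c₂ * Real.exp ((M - μ) * x) := by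
    intro x hx
    have hm : Real.exp (-((M - μ) * x)) * Real.exp ((M - μ) * x) = 1 := by
      rw [← Real.exp_add]; simp
    linear_combination Real.exp ((M - μ) * x) * hgc2 x hx - ((M - μ) * deriv V x - (M - r)) * hm
  obtain ⟨B, hformB⟩ : ∃ B : ℝ, ∀ x ∈ Ioi (0:ℝ),
      (M - μ) ^ 2 * V x - (M - μ) * (M - r) * x - c₂ * Real.exp ((M - μ) * x) = B := by
    refine ⟨(M - μ) ^ 2 * V 1 - (M - μ) * (M - r) * 1 - c₂ * Real.exp ((M - μ) * 1), fun x hx => ?_⟩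
    refine const_of_hasDerivAt_zero (convex_Ioi 0)
      (f := fun y => (M - μ) ^ 2 * V y - (M - μ) * (M - r) * y - c₂ * Real.exp ((M - μ) * y))
      ?_ hx (show (1:ℝ) ∈ Ioi 0 by norm_num)
    intro z hz
    have t1 : HasDerivAt (fun y => (M - μ) ^ 2 * V y) ((M - μ) ^ 2 * deriv V z) z :=
      (hVd z).hasDerivAt.const_mul ((M - μ) ^ 2)
    have t2 : HasDerivAt (fun y => (M - μ) * (M - r) * y) ((M - μ) * (M - r) * 1) z :=
      (hasDerivAt_id z).const_mul ((M - μ) * (M - r))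
    have t3 : HasDerivAt (fun y => Real.exp ((M - μ) * y)) (Real.exp ((M - μ) * z) * ((M - μ) * 1)) z :=
      ((hasDerivAt_id z).const_mul (M - μ)).exp
    have t4 := t3.const_mul c₂
    have tt := (t1.sub t2).sub t4
    have h0 : (M - μ) ^ 2 * deriv V z - (M - μ) * (M - r) * 1
        - c₂ * (Real.exp ((M - μ) * z) * ((M - μ) * 1)) = 0 := by
      linear_combination (M - μ) * hWpos z hz
    exact h0 ▸ tt
  have hc20 : c₂ = 0 := by
    refine decay (M - μ) |B| ((M - μ) * |M - r|) ((M - μ) ^ 2 * K) c₂ hβ n ?_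
    intro t ht
    have hf := hformB t ht
    have hVt := hKb t
    rw [abs_of_pos ht] at hVt
    have e2 : c₂ * Real.exp ((M - μ) * t)
        = (M - μ) ^ 2 * V t - (M - μ) * (M - r) * t - B := by
      linear_combination -hf
    calc |c₂| * Real.exp ((M - μ) * t) = |c₂ * Real.exp ((M - μ) * t)| := by
          rw [abs_mul, abs_of_pos (Real.exp_pos _)]
      _ = |(M - μ) ^ 2 * V t - (M - μ) * (M - r) * t - B| := by rw [e2]
      _ ≤ |(M - μ) ^ 2 * V t| + |(M - μ) * (M - r) * t| + |B| := abs3 _ _ _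
      _ ≤ |B| + (M - μ) * |M - r| * t + (M - μ) ^ 2 * K * (1 + t ^ n) := by
          have b1 : |(M - μ) ^ 2 * V t| ≤ (M - μ) ^ 2 * (K * (1 + t ^ n)) := by
            rw [abs_mul, abs_of_nonneg (by positivity : (0:ℝ) ≤ (M - μ) ^ 2)]
            exact mul_le_mul_of_nonneg_left hVt (by positivity)
          have b2 : |(M - μ) * (M - r) * t| = (M - μ) * |M - r| * t := by
            rw [abs_mul, abs_mul, abs_of_pos hβ, abs_of_pos ht]
          linarith
  -- ====== constant one-sided derivatives ======
  have hWneg0 : ∀ x ∈ Iio (0:ℝ), μ * deriv V x = r := by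
    intro x hx
    have := hWneg x hx
    rw [hc0] at this
    simpa [sub_eq_zero] using this
  have hWpos0 : ∀ x ∈ Ioi (0:ℝ), (M - μ) * deriv V x = M - r := by
    intro x hx
    have := hWpos x hx
    rw [hc20] at this
    simpa [sub_eq_zero] using this
  -- ====== continuity at 0 ======
  have e1 : μ * deriv V 0 = r := by
    have hl : Tendsto (fun x => μ * deriv V x) (𝓝[<] (0:ℝ)) (𝓝 (μ * deriv V 0)) :=
      ((continuous_const.mul hWc).tendsto 0).mono_left nhdsWithin_le_nhds
    have hl' : Tendsto (fun x => μ * deriv V x) (𝓝[<] (0:ℝ)) (𝓝 r) := by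
      refine Tendsto.congr' ?_ tendsto_const_nhds
      filter_upwards [self_mem_nhdsWithin] with x hx
      exact (hWneg0 x hx).symm
    exact tendsto_nhds_unique hl hl'
  have e2 : (M - μ) * deriv V 0 = M - r := by
    have hl : Tendsto (fun x => (M - μ) * deriv V x) (𝓝[>] (0:ℝ)) (𝓝 ((M - μ) * deriv V 0)) :=
      ((continuous_const.mul hWc).tendsto 0).mono_left nhdsWithin_le_nhds
    have hl' : Tendsto (fun x => (M - μ) * deriv V x) (𝓝[>] (0:ℝ)) (𝓝 (M - r)) := by
      refine Tendsto.congr' ?_ tendsto_const_nhds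
      filter_upwards [self_mem_nhdsWithin] with x hx
      exact (hWpos0 x hx).symm
    exact tendsto_nhds_unique hl hl'
  have hM0 : (0:ℝ) < M := hμ.trans hM
  have hW0 : deriv V 0 = 1 := by
    have : M * deriv V 0 = M * 1 := by linarith
    exact mul_left_cancel₀ hM0.ne' this
  have hr : r = μ := by rw [← e1, hW0, mul_one]
  refine ⟨hr, V 0, fun x => ?_⟩
  have hWall : ∀ x : ℝ, deriv V x = 1 := by
    intro x
    rcases lt_trichotomy x 0 with hx | hx | hx
    · have := hWneg0 x hx
      rw [hr] at this
      exact mul_left_cancel₀ hμ.ne' (by linarith)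
    · rw [hx]; exact hW0
    · have := hWpos0 x hx
      rw [hr] at this
      exact mul_left_cancel₀ hβ.ne' (by linarith)
  have hconst := is_const_of_deriv_eq_zero (𝕜 := ℝ) (f := fun y => V y - y)
    (hVd.sub differentiable_id)
    (fun y => by
      rw [deriv_fun_sub (g := fun y : ℝ => y) (hVd y) differentiableAt_id, deriv_id'', hWall y]
      ring) x 0
  simp only [sub_zero] at hconst
  linarith [hconst]
end Main
end
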